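/- arXiv:1908.06320 — 8 statements merged into one kernel-verified Lean document; each statement's English description precedes it below -/
import Mathlib

section
/- Two graphs G₁ and G₂ on n vertices are isomorphic if and only if their compatibility graph contains a clique of size n. -/
def compatGraph {V₁ V₂ : Type*} (G₁ : SimpleGraph V₁) (G₂ : SimpleGraph V₂) :
    SimpleGraph (V₁ × V₂) where
  Adj a b := a.1 ≠ b.1 ∧ a.2 ≠ b.2 ∧ (G₁.Adj a.1 b.1 ↔ G₂.Adj a.2 b.2)
  symm := by
    constructor
    rintro a b ⟨h1, h2, h3⟩
    exact ⟨h1.symm, h2.symm, by rw [G₁.adj_comm, G₂.adj_comm]; exact h3⟩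
  loopless := by constructor; rintro a ⟨h1, -⟩; exact h1 rfl

theorem stmt0 {V₁ V₂ : Type*} [Fintype V₁] [Fintype V₂]
    (n : ℕ) (h1 : Fintype.card V₁ = n) (h2 : Fintype.card V₂ = n)
    (G₁ : SimpleGraph V₁) (G₂ : SimpleGraph V₂) :
    Nonempty (G₁ ≃g G₂) ↔
      ∃ S : Finset (V₁ × V₂), (compatGraph G₁ G₂).IsNClique n S := by
  classical
  constructor
  · rintro ⟨e⟩
    refine ⟨Finset.univ.image (fun v => (v, e v)), ?_, ?_⟩
    · intro a ha b hb hab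
      simp only [Finset.coe_image, Set.mem_image] at ha hb
      obtain ⟨v, -, rfl⟩ := ha
      obtain ⟨w, -, rfl⟩ := hb
      have hvw : v ≠ w := by rintro rfl; exact hab rfl
      exact ⟨hvw, fun h => hvw (e.injective h), (e.map_adj_iff).symm⟩
    · rw [Finset.card_image_of_injective _ (fun a b h => congrArg Prod.fst h),
        Finset.card_univ, h1]
  · rintro ⟨S, hclique, hcard⟩
    have hcardS : Fintype.card S = Fintype.card V₁ := by
      rw [Fintype.card_coe, hcard, h1]
    have hcardS2 : Fintype.card S = Fintype.card V₂ := by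
      rw [Fintype.card_coe, hcard, h2]
    have hinj1 : Function.Injective (fun p : S => (p : V₁ × V₂).1) := by
      rintro ⟨a, ha⟩ ⟨b, hb⟩ h
      by_contra hne
      have := hclique ha hb (fun h' => hne (Subtype.ext h'))
      exact this.1 h
    have hinj2 : Function.Injective (fun p : S => (p : V₁ × V₂).2) := by
      rintro ⟨a, ha⟩ ⟨b, hb⟩ h
      by_contra hne
      have := hclique ha hb (fun h' => hne (Subtype.ext h'))
      exact this.2.1 h
    have hbij1 := (Fintype.bijective_iff_injective_and_card _).2 ⟨hinj1, hcardS⟩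
    have hbij2 := (Fintype.bijective_iff_injective_and_card _).2 ⟨hinj2, hcardS2⟩
    let e₁ := Equiv.ofBijective _ hbij1
    let e₂ := Equiv.ofBijective _ hbij2
    refine ⟨⟨e₁.symm.trans e₂, ?_⟩⟩
    intro v w
    simp only [Equiv.trans_apply]
    by_cases hvw : v = w
    · subst hvw
      simp only [SimpleGraph.irrefl]
    · have hne : e₁.symm v ≠ e₁.symm w := fun h => hvw (by
        have := congrArg e₁ h
        simpa using this)
      have hadj := hclique (e₁.symm v).2 (e₁.symm w).2 (fun h => hne (Subtype.ext h))
      have hv1 : ((e₁.symm v : S) : V₁ × V₂).1 = v := e₁.apply_symm_apply v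
      have hw1 : ((e₁.symm w : S) : V₁ × V₂).1 = w := e₁.apply_symm_apply w
      have := hadj.2.2
      rw [hv1, hw1] at this
      exact (this.symm)
end

section
/- If vertices (v₁,u₁), …, (v_k,u_k) form a clique in the compatibility graph of G₁ and G₂, then the subgraph of G₁ induced by {v₁,…,v_k} is isomorphic to the subgraph of G₂ induced by {u₁,…,u_k}, via the map vᵢ ↦ uᵢ. -/
theorem stmt1 {V₁ V₂ : Type*} (G₁ : SimpleGraph V₁) (G₂ : SimpleGraph V₂)
    (k : ℕ) (f : Fin k → V₁ × V₂)
    (hclique : ∀ i j, i ≠ j → (compatGraph G₁ G₂).Adj (f i) (f j)) :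
    ∃ e : (G₁.induce (Set.range fun i => (f i).1)) ≃g
          (G₂.induce (Set.range fun i => (f i).2)),
      ∀ i : Fin k, e ⟨(f i).1, ⟨i, rfl⟩⟩ = ⟨(f i).2, ⟨i, rfl⟩⟩ := by
  classical
  have h1inj : Function.Injective (fun i => (f i).1) := by
    intro i j h
    by_contra hij
    exact (hclique i j hij).1 h
  have h2inj : Function.Injective (fun i => (f i).2) := by
    intro i j h
    by_contra hij
    exact (hclique i j hij).2.1 h
  have idx1 : ∀ v : (Set.range fun i => (f i).1), ∃ i, (f i).1 = v.1 :=
    fun v => v.2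
  have idx2 : ∀ u : (Set.range fun i => (f i).2), ∃ i, (f i).2 = u.1 :=
    fun u => u.2
  let toF : (Set.range fun i => (f i).1) → (Set.range fun i => (f i).2) :=
    fun v => ⟨(f (idx1 v).choose).2, ⟨_, rfl⟩⟩
  let invF : (Set.range fun i => (f i).2) → (Set.range fun i => (f i).1) :=
    fun u => ⟨(f (idx2 u).choose).1, ⟨_, rfl⟩⟩
  have toF_spec : ∀ (i : Fin k) (h), toF ⟨(f i).1, h⟩ = ⟨(f i).2, ⟨i, rfl⟩⟩ := by
    intro i h
    have := (idx1 ⟨(f i).1, h⟩).choose_spec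
    have : (idx1 ⟨(f i).1, h⟩).choose = i := h1inj this
    simp only [toF]
    congr 1
    rw [this]
  have invF_spec : ∀ (i : Fin k) (h), invF ⟨(f i).2, h⟩ = ⟨(f i).1, ⟨i, rfl⟩⟩ := by
    intro i h
    have := (idx2 ⟨(f i).2, h⟩).choose_spec
    have : (idx2 ⟨(f i).2, h⟩).choose = i := h2inj this
    simp only [invF]
    congr 1
    rw [this]
  have left : Function.LeftInverse invF toF := by
    rintro ⟨v, hv⟩
    obtain ⟨i, hi⟩ := hv
    subst hi
    rw [toF_spec i ⟨i, rfl⟩, invF_spec i ⟨i, rfl⟩]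
  have right : Function.RightInverse invF toF := by
    rintro ⟨u, hu⟩
    obtain ⟨i, hi⟩ := hu
    subst hi
    rw [invF_spec i ⟨i, rfl⟩, toF_spec i ⟨i, rfl⟩]
  have adjIff : ∀ (i j : Fin k), G₁.Adj (f i).1 (f j).1 ↔ G₂.Adj (f i).2 (f j).2 := by
    intro i j
    by_cases hij : i = j
    · subst hij; simp
    · exact (hclique i j hij).2.2
  refine ⟨⟨⟨toF, invF, left, right⟩, ?_⟩, fun i => toF_spec i ⟨i, rfl⟩⟩
  rintro ⟨v, hv⟩ ⟨w, hw⟩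
  obtain ⟨i, hi⟩ := hv
  obtain ⟨j, hj⟩ := hw
  subst hi; subst hj
  show G₂.Adj (toF _).1 (toF _).1 ↔ _
  rw [toF_spec i ⟨i, rfl⟩, toF_spec j ⟨j, rfl⟩]
  exact (adjIff i j).symm
end

section
/- If G₁ and G₂ are isomorphic graphs on n vertices, then the number of cliques of size n in their compatibility graph equals the number of isomorphisms from G₁ to G₂ (equivalently, the number of automorphisms of G₁). -/
theorem stmt4 {V₁ V₂ : Type*} [Fintype V₁] [Fintype V₂]
    (n : ℕ) (h1 : Fintype.card V₁ = n) (h2 : Fintype.card V₂ = n)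
    (G₁ : SimpleGraph V₁) (G₂ : SimpleGraph V₂) (hiso : Nonempty (G₁ ≃g G₂)) :
    Nat.card {S : Finset (V₁ × V₂) // (compatGraph G₁ G₂).IsNClique n S} =
      Nat.card (G₁ ≃g G₂) ∧
    Nat.card (G₁ ≃g G₂) = Nat.card (G₁ ≃g G₁) := by
  classical
  constructor
  · -- bijection between cliques and isomorphisms
    have toClique : ∀ φ : G₁ ≃g G₂,
        (compatGraph G₁ G₂).IsNClique n (Finset.univ.image fun v => (v, φ v)) := by
      intro φ
      constructor
      · intro a ha b hb hab
        simp only [Finset.coe_image, Set.mem_image, Finset.coe_univ, Set.image_univ,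
          Set.mem_range] at ha hb
        obtain ⟨v, rfl⟩ := ha
        obtain ⟨w, rfl⟩ := hb
        have hvw : v ≠ w := fun h => hab (by rw [h])
        exact ⟨hvw, fun h => hvw (φ.injective h), φ.map_adj_iff.symm⟩
      · rw [Finset.card_image_of_injective _ (fun a b hab => (Prod.mk.injEq _ _ _ _ ▸ hab).1),
          Finset.card_univ, h1]
    refine Nat.card_congr (Equiv.ofBijective
      (fun φ : G₁ ≃g G₂ => (⟨Finset.univ.image fun v => (v, φ v), toClique φ⟩ :
        {S : Finset (V₁ × V₂) // (compatGraph G₁ G₂).IsNClique n S})) ⟨?_, ?_⟩).symm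
    · intro φ ψ h
      simp only [Subtype.mk.injEq] at h
      have : ∀ v, φ v = ψ v := by
        intro v
        have hv : (v, φ v) ∈ Finset.univ.image fun w => (w, ψ w) := by
          rw [← h]; exact Finset.mem_image_of_mem _ (Finset.mem_univ v)
        obtain ⟨w, -, hw⟩ := Finset.mem_image.mp hv
        obtain ⟨rfl, h2⟩ := Prod.mk.injEq _ _ _ _ ▸ hw
        exact h2.symm
      exact DFunLike.ext φ ψ this
    · rintro ⟨S, hS⟩
      -- first projection injective on S
      have fstinj : ∀ a ∈ S, ∀ b ∈ S, a.1 = b.1 → a = b := by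
        intro a ha b hb hfst
        by_contra hne
        exact (hS.1 ha hb hne).1 hfst
      have sndinj : ∀ a ∈ S, ∀ b ∈ S, a.2 = b.2 → a = b := by
        intro a ha b hb hsnd
        by_contra hne
        exact (hS.1 ha hb hne).2.1 hsnd
      -- every v ∈ V₁ appears as a first coordinate
      have himg : S.image Prod.fst = Finset.univ := by
        apply Finset.eq_univ_of_card
        rw [Finset.card_image_of_injOn (fun a ha b hb => fstinj a ha b hb), hS.2, h1]
      have hex : ∀ v : V₁, ∃ u, (v, u) ∈ S := by
        intro v
        have : v ∈ S.image Prod.fst := himg ▸ Finset.mem_univ v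
        obtain ⟨a, ha, ha2⟩ := Finset.mem_image.mp this
        exact ⟨a.2, by rwa [← ha2]⟩
      choose f hf using hex
      have finj : Function.Injective f := by
        intro v w h
        have := sndinj (v, f v) (hf v) (w, f w) (hf w) h
        exact (Prod.mk.injEq _ _ _ _ ▸ this).1
      have fbij : Function.Bijective f :=
        (Fintype.bijective_iff_injective_and_card f).mpr ⟨finj, h1.trans h2.symm⟩
      have hadj : ∀ v w, G₁.Adj v w ↔ G₂.Adj (f v) (f w) := by
        intro v w
        by_cases hvw : v = w
        · subst hvw; simp
        · have hne : (v, f v) ≠ (w, f w) := fun h => hvw (Prod.mk.injEq _ _ _ _ ▸ h).1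
          exact (hS.1 (hf v) (hf w) hne).2.2
      refine ⟨⟨Equiv.ofBijective f fbij, fun {v w} => (hadj v w).symm⟩, ?_⟩
      apply Subtype.ext
      apply Finset.eq_of_subset_of_card_le
      · intro a ha
        obtain ⟨v, -, rfl⟩ := Finset.mem_image.mp ha
        exact hf v
      · rw [hS.2, Finset.card_image_of_injective _
          (fun a b hab => (Prod.mk.injEq _ _ _ _ ▸ hab).1), Finset.card_univ, h1]
  · obtain ⟨e⟩ := hiso
    exact Nat.card_congr ⟨fun g => e.symm.comp g, fun g => e.comp g,
      fun g => DFunLike.ext _ _ (fun v => by simp [SimpleGraph.Iso.comp]),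
      fun g => DFunLike.ext _ _ (fun v => by simp [SimpleGraph.Iso.comp])⟩
end

section
/- Let x ∈ ℝ^m where the index set {1,…,m} is partitioned into n sets P₁,…,Pₙ, suppose ∑ᵢ xᵢ² = n, xᵢ·xⱼ = 0 whenever i ≠ j lie in the same part, and xᵢ·xⱼ ≤ 1 for all i ≠ j in different parts. Then ∑ᵢ ∑ⱼ xᵢ xⱼ ≤ n². -/
theorem stmt5 (n m : ℕ) (hm : m = n ^ 2) (x : Fin m → ℝ) (P : Fin m → Fin n)
    (hsum : ∑ i, x i ^ 2 = (n : ℝ))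
    (horth : ∀ i j, i ≠ j → P i = P j → x i * x j = 0)
    (hle : ∀ i j, i ≠ j → P i ≠ P j → x i * x j ≤ 1) :
    ∑ i, ∑ j, x i * x j ≤ (n : ℝ) ^ 2 := by
  classical
  set A : Fin n → Finset (Fin m) := fun k => Finset.univ.filter (fun i => P i = k) with hA
  have hfib : ∀ (f : Fin m → ℝ), ∑ k, ∑ i ∈ A k, f i = ∑ i, f i := fun f =>
    Finset.sum_fiberwise _ _ _
  have h1 : ∑ i, ∑ j, x i * x j = (∑ i, x i) ^ 2 := by
    rw [sq, Finset.sum_mul_sum]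
  have h3 : ∀ k, (∑ i ∈ A k, x i) ^ 2 = ∑ i ∈ A k, x i ^ 2 := by
    intro k
    rw [sq, Finset.sum_mul_sum]
    apply Finset.sum_congr rfl
    intro i hi
    rw [Finset.sum_eq_single i]
    · ring
    · intro j hj hji
      have hPi : P i = k := (Finset.mem_filter.mp hi).2
      have hPj : P j = k := (Finset.mem_filter.mp hj).2
      exact horth i j (Ne.symm hji) (hPi.trans hPj.symm)
    · intro h; exact absurd hi h
  have h4 : ∑ k, (∑ i ∈ A k, x i) ^ 2 = (n : ℝ) := by
    calc ∑ k, (∑ i ∈ A k, x i) ^ 2 = ∑ k, ∑ i ∈ A k, x i ^ 2 :=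
          Finset.sum_congr rfl fun k _ => h3 k
      _ = ∑ i, x i ^ 2 := hfib _
      _ = (n : ℝ) := hsum
  have hCS : (∑ k, ∑ i ∈ A k, x i) ^ 2 ≤
      ((Finset.univ : Finset (Fin n)).card : ℝ) * ∑ k, (∑ i ∈ A k, x i) ^ 2 :=
    sq_sum_le_card_mul_sum_sq
  rw [h1, ← hfib x]
  calc (∑ k, ∑ i ∈ A k, x i) ^ 2
      ≤ ((Finset.univ : Finset (Fin n)).card : ℝ) * ∑ k, (∑ i ∈ A k, x i) ^ 2 := hCS
    _ = (n : ℝ) * (n : ℝ) := by rw [h4, Finset.card_univ, Fintype.card_fin]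
    _ = (n : ℝ) ^ 2 := (sq (n : ℝ)).symm
end

section
/- Suppose the compatibility graph G_c of two n-vertex graphs contains no clique of size n (n ≥ 2). If x ∈ ℝ^{V_c} satisfies ∑ᵢ xᵢ² = n, xᵢ xⱼ = 0 whenever i and j are not adjacent in G_c, and xᵢ xⱼ ≤ 1 whenever i and j are adjacent, then ∑ᵢ ∑ⱼ xᵢ xⱼ ≤ n + (n-1)(n-2). -/
theorem stmt7 {V₁ V₂ : Type*} [Fintype V₁] [Fintype V₂]
    (n : ℕ) (hn : 2 ≤ n) (h1 : Fintype.card V₁ = n) (h2 : Fintype.card V₂ = n)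
    (G₁ : SimpleGraph V₁) (G₂ : SimpleGraph V₂)
    (hnoclique : ¬ ∃ S : Finset (V₁ × V₂), (compatGraph G₁ G₂).IsNClique n S)
    (x : V₁ × V₂ → ℝ)
    (hsum : ∑ i, x i ^ 2 = (n : ℝ))
    (hzero : ∀ i j, ¬ (compatGraph G₁ G₂).Adj i j → i ≠ j → x i * x j = 0)
    (hle : ∀ i j, (compatGraph G₁ G₂).Adj i j → x i * x j ≤ 1) :
    ∑ i, ∑ j, x i * x j ≤ (n : ℝ) + ((n : ℝ) - 1) * ((n : ℝ) - 2) := by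
  classical
  set S : Finset (V₁ × V₂) := Finset.univ.filter (fun i => x i ≠ 0) with hSdef
  have hmemS : ∀ i, i ∈ S ↔ x i ≠ 0 := by
    intro i; simp [hSdef]
  -- S is a clique
  have hclique : (compatGraph G₁ G₂).IsClique S := by
    intro i hi j hj hij
    by_contra hadj
    have h0 := hzero i j hadj hij
    rcases mul_eq_zero.mp h0 with h | h
    · exact (hmemS i).mp hi h
    · exact (hmemS j).mp hj h
  have hcard : S.card ≤ n - 1 := by
    by_contra h
    push_neg at h
    have hle' : n ≤ S.card := by omega
    obtain ⟨T, hTS, hT⟩ := Finset.exists_subset_card_eq hle'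
    exact hnoclique ⟨T, hclique.subset hTS, hT⟩
  -- split the double sum
  have hsplit : ∑ i, ∑ j, x i * x j
      = ∑ i, x i ^ 2 + ∑ i, ∑ j ∈ Finset.univ.erase i, x i * x j := by
    rw [← Finset.sum_add_distrib]
    refine Finset.sum_congr rfl fun i _ => ?_
    rw [← Finset.add_sum_erase _ _ (Finset.mem_univ i), sq]
  -- restrict the off-diagonal sum to S
  have hrestrict : ∑ i, ∑ j ∈ Finset.univ.erase i, x i * x j
      = ∑ i ∈ S, ∑ j ∈ S.erase i, x i * x j := by
    rw [← Finset.sum_filter_of_ne (p := fun i => x i ≠ 0)]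
    · refine Finset.sum_congr rfl fun i hi => ?_
      rw [← Finset.sum_filter_of_ne (p := fun j => x j ≠ 0)]
      · congr 1
        ext j
        simp [hSdef, Finset.mem_erase, Finset.mem_filter, and_comm]
      · intro j _ hne hj
        exact (mul_ne_zero_iff.mp hne).2 hj
    · intro i _ hne hi
      exact hne (Finset.sum_eq_zero fun j _ => by rw [hi, zero_mul])
  -- bound the off-diagonal sum
  have hbound : ∑ i ∈ S, ∑ j ∈ S.erase i, x i * x j
      ≤ ((n : ℝ) - 1) * ((n : ℝ) - 2) := by
    have hinner : ∀ i ∈ S, ∑ j ∈ S.erase i, x i * x j ≤ (n : ℝ) - 2 := by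
      intro i hi
      calc ∑ j ∈ S.erase i, x i * x j ≤ ∑ j ∈ S.erase i, (1 : ℝ) := by
            refine Finset.sum_le_sum fun j hj => ?_
            have hji : j ≠ i := (Finset.mem_erase.mp hj).1
            have hjS : j ∈ S := (Finset.mem_erase.mp hj).2
            exact hle i j (hclique hi hjS hji.symm)
        _ = ((S.erase i).card : ℝ) := by simp
        _ ≤ ((n : ℕ) : ℝ) - 2 := by
            have h1 : (S.erase i).card ≤ n - 2 := by
              have := Finset.card_erase_of_mem hi
              omega
            have : ((S.erase i).card : ℝ) ≤ ((n - 2 : ℕ) : ℝ) := by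
              exact_mod_cast h1
            rwa [Nat.cast_sub hn] at this
    calc ∑ i ∈ S, ∑ j ∈ S.erase i, x i * x j
        ≤ ∑ i ∈ S, ((n : ℝ) - 2) := Finset.sum_le_sum hinner
      _ = (S.card : ℝ) * ((n : ℝ) - 2) := by rw [Finset.sum_const, nsmul_eq_mul]
      _ ≤ ((n : ℝ) - 1) * ((n : ℝ) - 2) := by
          have hc : (S.card : ℝ) ≤ (n : ℝ) - 1 := by
            have h' : ((S.card : ℕ) : ℝ) ≤ ((n - 1 : ℕ) : ℝ) := by exact_mod_cast hcard
            rw [Nat.cast_sub (by omega)] at h'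
            push_cast at h'
            linarith
          have hnn : (0 : ℝ) ≤ (n : ℝ) - 2 := by
            have h2' : (2 : ℝ) ≤ (n : ℝ) := by exact_mod_cast hn
            linarith
          exact mul_le_mul_of_nonneg_right hc hnn
  rw [hsplit, hsum, hrestrict]
  linarith
end

section
/- Let v₁,…,v_m be vectors in ℝ^d with m = n², the index set partitioned into n parts such that vectors in the same part are pairwise orthogonal, ∑ᵢ ⟨vᵢ,vᵢ⟩ = n, and ⟨vᵢ,vⱼ⟩ ≤ 1 for all i ≠ j. Then ∑ᵢ ∑ⱼ ⟨vᵢ,vⱼ⟩ ≤ n². -/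
theorem stmt8 (n m d : ℕ) (hm : m = n ^ 2) (v : Fin m → Fin d → ℝ) (P : Fin m → Fin n)
    (horth : ∀ i j, i ≠ j → P i = P j → ∑ t, v i t * v j t = 0)
    (hsum : ∑ i, ∑ t, v i t * v i t = (n : ℝ))
    (hle : ∀ i j, i ≠ j → ∑ t, v i t * v j t ≤ 1) :
    ∑ i, ∑ j, ∑ t, v i t * v j t ≤ (n : ℝ) ^ 2 := by
  classical
  set w : Fin n → Fin d → ℝ := fun k t => ∑ i ∈ Finset.univ.filter (fun i => P i = k), v i t
    with hw
  have key : ∑ k, ∑ t, (w k t) ^ 2 = (n : ℝ) := by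
    have : ∀ k, ∑ t, (w k t) ^ 2
        = ∑ i ∈ Finset.univ.filter (fun i => P i = k), ∑ t, v i t * v i t := by
      intro k
      have : ∀ t, (w k t) ^ 2 = ∑ i ∈ Finset.univ.filter (fun i => P i = k),
          ∑ j ∈ Finset.univ.filter (fun i => P i = k), v i t * v j t := by
        intro t
        rw [hw]
        simp [sq, Finset.sum_mul_sum]
      rw [Finset.sum_congr rfl fun t _ => this t, Finset.sum_comm]
      refine Finset.sum_congr rfl fun i hi => ?_
      rw [Finset.sum_comm]
      rw [Finset.sum_eq_single_of_mem i hi]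
      intro j hj hji
      simp only [Finset.mem_filter] at hi hj
      exact horth i j (Ne.symm hji) (hi.2.trans hj.2.symm)
    rw [Finset.sum_congr rfl fun k _ => this k,
      Finset.sum_fiberwise Finset.univ P fun i => ∑ t, v i t * v i t, hsum]
  have lhs_eq : ∑ i, ∑ j, ∑ t, v i t * v j t = ∑ t, (∑ k, w k t) ^ 2 := by
    have h1 : ∀ t, (∑ k, w k t) = ∑ i, v i t := fun t =>
      Finset.sum_fiberwise (s := Finset.univ) (g := P) (f := fun i => v i t)
    calc ∑ i, ∑ j, ∑ t, v i t * v j t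
        = ∑ i, ∑ t, ∑ j, v i t * v j t :=
          Finset.sum_congr rfl fun i _ => Finset.sum_comm
      _ = ∑ t, ∑ i, ∑ j, v i t * v j t := Finset.sum_comm
      _ = ∑ t, (∑ k, w k t) ^ 2 := by
          refine Finset.sum_congr rfl fun t _ => ?_
          rw [h1, sq, Finset.sum_mul_sum]
  rw [lhs_eq]
  calc ∑ t, (∑ k, w k t) ^ 2
      ≤ ∑ t, (n : ℝ) * ∑ k, (w k t) ^ 2 := by
        refine Finset.sum_le_sum fun t _ => ?_
        have := sq_sum_le_card_mul_sum_sq (s := Finset.univ) (f := fun k => w k t)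
        simpa using this
    _ = (n : ℝ) * ∑ k, ∑ t, (w k t) ^ 2 := by
        rw [← Finset.mul_sum, Finset.sum_comm]
    _ = (n : ℝ) ^ 2 := by rw [key]; ring
end

section
/- Suppose the compatibility graph G_c of two n-vertex graphs contains d ≥ 1 cliques of size n, say S₁,…,S_d. Define vᵢ ∈ ℝ^d by (vᵢ)ⱼ = 1/√d if vertex i ∈ Sⱼ and 0 otherwise, and set X_{ij} = ⟨vᵢ,vⱼ⟩. Then X is positive semidefinite, trace(X) = n, X_{ij} = 0 for all non-adjacent i ≠ j, X_{ij} ≤ 1 for all i,j, and trace(JX) = n². -/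
theorem stmt10 {V₁ V₂ : Type*} [Fintype V₁] [Fintype V₂] [DecidableEq V₁] [DecidableEq V₂]
    (n d : ℕ) (hd : 1 ≤ d) (h1 : Fintype.card V₁ = n) (h2 : Fintype.card V₂ = n)
    (G₁ : SimpleGraph V₁) (G₂ : SimpleGraph V₂)
    (S : Fin d → Finset (V₁ × V₂)) (hS : ∀ j, (compatGraph G₁ G₂).IsNClique n (S j))
    (hSinj : Function.Injective S)
    (v : V₁ × V₂ → Fin d → ℝ)
    (hv : v = fun i j => if i ∈ S j then 1 / Real.sqrt d else 0)
    (X : Matrix (V₁ × V₂) (V₁ × V₂) ℝ) (hX : X = Matrix.of fun i j => ∑ t, v i t * v j t)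
    (J : Matrix (V₁ × V₂) (V₁ × V₂) ℝ) (hJ : J = Matrix.of fun _ _ => (1 : ℝ)) :
    X.PosSemidef ∧
    Matrix.trace X = (n : ℝ) ∧
    (∀ i j, i ≠ j → ¬ (compatGraph G₁ G₂).Adj i j → X i j = 0) ∧
    (∀ i j, X i j ≤ 1) ∧
    Matrix.trace (J * X) = (n : ℝ) ^ 2 := by
  have hd0 : (0:ℝ) < d := by exact_mod_cast hd
  have hsq : Real.sqrt d * Real.sqrt d = d := Real.mul_self_sqrt (le_of_lt hd0)
  have hcol : ∀ t, ∑ i, v i t = (n : ℝ) / Real.sqrt d := by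
    intro t
    subst hv
    simp only
    rw [Finset.sum_ite_mem, Finset.univ_inter, Finset.sum_const, (hS t).card_eq]
    simp [div_eq_mul_inv, mul_comm]
  have hdiag : ∀ i t, v i t * v i t = if i ∈ S t then (1:ℝ)/d else 0 := by
    intro i t
    subst hv
    simp only
    split_ifs with h
    · rw [div_mul_div_comm, one_mul, hsq]
    · ring
  constructor
  · have hXg : X = (Matrix.of v) * (Matrix.of v).conjTranspose := by
      subst hX
      ext i j
      simp [Matrix.mul_apply]
    rw [hXg]
    exact Matrix.posSemidef_self_mul_conjTranspose _
  refine ⟨?_, ?_, ?_, ?_⟩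
  · -- trace
    subst hX
    rw [Matrix.trace]
    simp only [Matrix.diag_apply, Matrix.of_apply]
    rw [Finset.sum_comm]
    have key : ∀ t : Fin d, ∑ i, v i t * v i t = (n:ℝ)/d := by
      intro t
      simp only [hdiag]
      rw [Finset.sum_ite_mem, Finset.univ_inter, Finset.sum_const, (hS t).card_eq]
      simp [div_eq_mul_inv, mul_comm]
    rw [Finset.sum_congr rfl fun t _ => key t, Finset.sum_const, Finset.card_univ,
      Fintype.card_fin, nsmul_eq_mul]
    field_simp
  · -- nonadjacent
    intro i j hij hadj
    subst hX
    simp only [Matrix.of_apply]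
    apply Finset.sum_eq_zero
    intro t _
    subst hv
    simp only
    split_ifs with h h'
    · exact absurd ((hS t).isClique h h' hij) hadj
    all_goals ring
  · -- ≤ 1
    intro i j
    subst hX
    simp only [Matrix.of_apply]
    have hle : ∀ t : Fin d, v i t * v j t ≤ 1/d := by
      intro t
      subst hv
      simp only [one_div]
      have key : (Real.sqrt (d:ℝ))⁻¹ * (Real.sqrt (d:ℝ))⁻¹ = ((d:ℝ))⁻¹ := by
        rw [← mul_inv, hsq]
      split_ifs <;> simp [key] <;> positivity
    calc ∑ t, v i t * v j t ≤ ∑ _t : Fin d, (1:ℝ)/d :=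
          Finset.sum_le_sum fun t _ => hle t
    _ = 1 := by
        rw [Finset.sum_const, Finset.card_univ, Fintype.card_fin, nsmul_eq_mul]
        field_simp
  · -- trace (J * X)
    subst hX hJ
    rw [Matrix.trace]
    simp only [Matrix.diag_apply, Matrix.mul_apply, Matrix.of_apply, one_mul]
    have key : ∑ i : V₁ × V₂, ∑ k : V₁ × V₂, ∑ t, v k t * v i t
        = ∑ t : Fin d, (∑ i, v i t) * (∑ k, v k t) := by
      calc ∑ i : V₁ × V₂, ∑ k : V₁ × V₂, ∑ t, v k t * v i t
          = ∑ i : V₁ × V₂, ∑ t, ∑ k : V₁ × V₂, v k t * v i t :=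
            Finset.sum_congr rfl fun i _ => Finset.sum_comm
        _ = ∑ t, ∑ i : V₁ × V₂, ∑ k : V₁ × V₂, v k t * v i t := Finset.sum_comm
        _ = ∑ t : Fin d, (∑ i, v i t) * (∑ k, v k t) := by
            refine Finset.sum_congr rfl fun t _ => ?_
            rw [Finset.sum_mul_sum]
            exact Finset.sum_congr rfl fun i _ =>
              Finset.sum_congr rfl fun k _ => mul_comm _ _
    rw [key]
    have key2 : ∀ t : Fin d, (∑ i, v i t) * (∑ k, v k t) = (n:ℝ)^2 / d := by
      intro t
      rw [hcol t, div_mul_div_comm, hsq]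
      ring_nf
    rw [Finset.sum_congr rfl fun t _ => key2 t, Finset.sum_const, Finset.card_univ,
      Fintype.card_fin, nsmul_eq_mul]
    field_simp
end

section
/- For each coordinate t, if at least one of the real numbers a₁,…,aₙ is zero, then ∑_{k≠l} aₖ a_l ≤ (n−2) ∑ₖ aₖ². -/
theorem stmt12 (n : ℕ) (hn : 2 ≤ n) (a : Fin n → ℝ) (h0 : ∃ k, a k = 0) :
    ∑ p ∈ Finset.univ.offDiag, a p.1 * a p.2 ≤ ((n : ℝ) - 2) * ∑ k, a k ^ 2 := by
  obtain ⟨k0, hk0⟩ := h0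
  have key : ∑ p ∈ Finset.univ.offDiag, a p.1 * a p.2
      = (∑ k, a k) ^ 2 - ∑ k, a k ^ 2 := by
    have hsq : (∑ k, a k) ^ 2 = ∑ p ∈ Finset.univ ×ˢ Finset.univ, a p.1 * a p.2 := by
      rw [sq, Finset.sum_mul_sum, Finset.sum_product]
    rw [hsq, ← Finset.diag_union_offDiag,
      Finset.sum_union (Finset.disjoint_diag_offDiag _), Finset.sum_diag]
    simp only [sq]
    ring
  rw [key, sub_le_iff_le_add]
  have hcs : (∑ k, a k) ^ 2 ≤ ((n : ℝ) - 1) * ∑ k, a k ^ 2 := by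
    have he : ∑ k, a k = ∑ k ∈ Finset.univ.erase k0, a k := by
      rw [Finset.sum_erase _ hk0]
    rw [he]
    calc (∑ k ∈ Finset.univ.erase k0, a k) ^ 2
        ≤ (Finset.univ.erase k0).card * ∑ k ∈ Finset.univ.erase k0, a k ^ 2 :=
          sq_sum_le_card_mul_sum_sq
      _ ≤ ((n : ℝ) - 1) * ∑ k, a k ^ 2 := by
          have hcard : ((Finset.univ.erase k0).card : ℝ) = (n : ℝ) - 1 := by
            rw [Finset.card_erase_of_mem (Finset.mem_univ _)]
            simp
            have : 1 ≤ n := by omega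
            push_cast [Nat.cast_sub this]
            ring
          rw [hcard]
          apply mul_le_mul_of_nonneg_left _ (by
            have : (2:ℝ) ≤ n := by exact_mod_cast hn
            linarith)
          exact Finset.sum_le_sum_of_subset_of_nonneg (Finset.subset_univ _)
            (fun i _ _ => sq_nonneg _)
  calc (∑ k, a k) ^ 2 ≤ ((n : ℝ) - 1) * ∑ k, a k ^ 2 := hcs
    _ = ((n : ℝ) - 2) * ∑ k, a k ^ 2 + ∑ k, a k ^ 2 := by ring
end
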